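/- The Z-operators of the representation π act trivially on the Fock factor F and commute with the Heisenberg algebra: for every m ∈ ℤ, the operator Z⁺(m) := Σ_{a,b≥0} (d⁻_a ⊗1⊗1) ∘ X(m+a−b) ∘ (c⁻_b ⊗1⊗1) on V (the coefficient of z^{−m} in E⁻₊(z)X(z)E⁻₋(z); only finitely many terms act nontrivially on each vector) satisfies Z⁺(m)(f⊗v⊗e^{pα}) = f ⊗ A(m−p−1/2)v ⊗ e^{(p+1)α}, and the operator Z⁻(m) := Σ_{a,b≥0} (d⁺_a ⊗1⊗1) ∘ Y(m+a−b) ∘ (c⁺_b ⊗1⊗1) satisfies Z⁻(m)(f⊗v⊗e^{pα}) = f ⊗ A*(m+p−1/2)v ⊗ e^{(p−1)α}. In particular, Z⁺(m) and Z⁻(m) commute with H(n)⊗1⊗1 for every n ≠ 0. -/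

import Mathlib

open MvPolynomial

/-- The semi-infinite wedge space `Λ`: complex vector space with basis `v_{S,T}`
indexed by pairs `(S, T)` of finite subsets of the positive integers.  The basis
vector `v_{S,T}` encodes the semi-infinite wedge product with support
`supp(S,T) = {-s-1/2 : s ∈ S} ∪ {-1/2} ∪ {k+1/2 : k ∈ ℤ_{≥1}, k ∉ T} ⊆ ℤ + 1/2`. -/
abbrev Wedge : Type := (Finset ℕ+ × Finset ℕ+) →₀ ℂ

/-- Image of the basis vector `v_{S,T}` under the operator `A(m)` (for `m ∈ ℤ + 1/2`,
i.e. a rational with denominator `2`; `A(m) := 0` for other rationals).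
`A(m) v_{S,T} = 0` if `m ∈ supp(S,T)` or `m = 1/2`; otherwise
`A(m) v_{S,T} = (m - 1/2) ⬝ (-1)^j ⬝ v_{S',T'}` where `j = #{i ∈ supp(S,T) : i < m}`
and `supp(S',T') = supp(S,T) ∪ {m}`.  Writing `m = n + 1/2` with `n = ⌊m⌋ ∈ ℤ`:
if `n ≥ 1` then `m ∈ supp(S,T)` iff `n ∉ T`, and the new support corresponds to
`(S, T \ {n})` with sign exponent `j = |S| + n - #{t ∈ T : t < n}`;
if `n ≤ -2` then `m = -s - 1/2` with `s = -n-1 ≥ 1`, `m ∈ supp(S,T)` iff `s ∈ S`,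
and the new support corresponds to `(S ∪ {s}, T)` with `j = #{s' ∈ S : s' > s}`;
if `n = 0` (`m = 1/2`) or `n = -1` (`m = -1/2 ∈ supp(S,T)`) the result is `0`. -/
noncomputable def Abasis (m : ℚ) (ST : Finset ℕ+ × Finset ℕ+) : Wedge :=
  if m.den = 2 then
    let n : ℤ := ⌊m⌋
    if hn : 1 ≤ n then
      let k : ℕ+ := ⟨n.toNat, by omega⟩
      if k ∈ ST.2 then
        (((n : ℂ)) * (-1) ^ (ST.1.card + n.toNat - (ST.2.filter (· < k)).card)) •
          Finsupp.single (ST.1, ST.2.erase k) (1 : ℂ)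
      else 0
    else if hn' : n ≤ -2 then
      let s : ℕ+ := ⟨(-n - 1).toNat, by omega⟩
      if s ∈ ST.1 then 0
      else
        (((n : ℂ)) * (-1) ^ ((ST.1.filter (s < ·)).card)) •
          Finsupp.single (insert s ST.1, ST.2) (1 : ℂ)
    else 0
  else 0

/-- Image of the basis vector `v_{S,T}` under the operator `A*(m)` (for `m ∈ ℤ + 1/2`).
`A*(m) v_{S,T} = 0` if `-m ∉ supp(S,T)` or `m = 1/2`; otherwise
`A*(m) v_{S,T} = (m - 1/2) ⬝ (-1)^{j'} ⬝ v_{S'',T''}` where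
`j' = #{i ∈ supp(S,T) : i < -m}` and `supp(S'',T'') = supp(S,T) \ {-m}`.
Writing `m = n + 1/2`, `n = ⌊m⌋`: if `n ≥ 1` then `-m = -n - 1/2 ∈ supp(S,T)` iff
`n ∈ S`, new pair `(S \ {n}, T)`, `j' = #{s' ∈ S : s' > n}`; if `n ≤ -2` then
`-m = k + 1/2` with `k = -n-1 ≥ 1`, `-m ∈ supp(S,T)` iff `k ∉ T`, new pair
`(S, T ∪ {k})`, `j' = |S| + k - #{t ∈ T : t < k}`; otherwise `0`. -/
noncomputable def AstarBasis (m : ℚ) (ST : Finset ℕ+ × Finset ℕ+) : Wedge :=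
  if m.den = 2 then
    let n : ℤ := ⌊m⌋
    if hn : 1 ≤ n then
      let s : ℕ+ := ⟨n.toNat, by omega⟩
      if s ∈ ST.1 then
        (((n : ℂ)) * (-1) ^ ((ST.1.filter (s < ·)).card)) •
          Finsupp.single (ST.1.erase s, ST.2) (1 : ℂ)
      else 0
    else if hn' : n ≤ -2 then
      let k : ℕ+ := ⟨(-n - 1).toNat, by omega⟩
      if k ∈ ST.2 then 0
      else
        (((n : ℂ)) * (-1) ^ (ST.1.card + (-n - 1).toNat - (ST.2.filter (· < k)).card)) •
          Finsupp.single (ST.1, insert k ST.2) (1 : ℂ)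
    else 0
  else 0

/-- The operator `A(m)` on the semi-infinite wedge space `Λ`, extended linearly. -/
noncomputable def Aop (m : ℚ) : Wedge →ₗ[ℂ] Wedge :=
  Finsupp.lsum ℂ fun ST => LinearMap.toSpanSingleton ℂ Wedge (Abasis m ST)

/-- The operator `A*(m)` on the semi-infinite wedge space `Λ`, extended linearly. -/
noncomputable def AstarOp (m : ℚ) : Wedge →ₗ[ℂ] Wedge :=
  Finsupp.lsum ℂ fun ST => LinearMap.toSpanSingleton ℂ Wedge (AstarBasis m ST)

/-- The Fock space `F = ℂ[x_1, x_2, ...]`, a polynomial ring in countably many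
variables indexed by the positive integers. -/
abbrev Fock : Type := MvPolynomial ℕ+ ℂ

/-- Endomorphisms of the Fock space. -/
abbrev EndF : Type := Module.End ℂ Fock

/-- The Heisenberg operators on the Fock space: `H(-n)` is multiplication by `x_n`
and `H(n) = -4n ∂/∂x_n` for `n ≥ 1` (and `0` for `n = 0`, which is never used). -/
noncomputable def HF (n : ℤ) : EndF :=
  if hn : 1 ≤ n then ((-4 : ℂ) * (n : ℂ)) • (pderiv (⟨n.toNat, by omega⟩ : ℕ+)).toLinearMap
  else if hn' : n ≤ -1 then LinearMap.mulLeft ℂ (X (⟨(-n).toNat, by omega⟩ : ℕ+))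
  else 0

/-- `sgn true = -1`, `sgn false = 1`: the sign `∓` attached to the label `ε ∈ {+, -}`
(`ε = +` is `true`), as in `E^±_+(z) = exp(∓ Σ_{n>0} x_n z^n / (2n))`. -/
def sgn (ε : Bool) : ℂ := if ε then -1 else 1

/-- The coefficient of `z^k` in the exponential `exp(g(z)) = Σ_j g(z)^j / j!` of an
operator-valued formal power series `g` (with zero constant term, so that only the
terms `j ≤ k` contribute to the coefficient of `z^k`). -/
noncomputable def expCoeff (g : PowerSeries EndF) (k : ℕ) : EndF :=
  ∑ j ∈ Finset.range (k + 1), ((j.factorial : ℂ))⁻¹ • (PowerSeries.coeff k (g ^ j))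

/-- The series `∓ Σ_{n > 0} x_n z^n / (2n)` (multiplication operators). -/
noncomputable def dSeries (ε : Bool) : PowerSeries EndF :=
  PowerSeries.mk fun n =>
    if hn : 0 < n then sgn ε • (((2 * n : ℂ))⁻¹ • LinearMap.mulLeft ℂ (X (⟨n, hn⟩ : ℕ+)))
    else 0

/-- The series `∓ 2 Σ_{n > 0} (∂/∂x_n) w^n`, where `w` stands for `z^{-1}`. -/
noncomputable def cSeries (ε : Bool) : PowerSeries EndF :=
  PowerSeries.mk fun n =>
    if hn : 0 < n then sgn ε • ((2 : ℂ) • (pderiv (⟨n, hn⟩ : ℕ+)).toLinearMap)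
    else 0

/-- `d^ε_l`, the coefficient of `z^l` in `E^ε_+(z) = exp(∓ Σ_{n>0} x_n z^n/(2n))`. -/
noncomputable def dOp (ε : Bool) (l : ℕ) : EndF := expCoeff (dSeries ε) l

/-- `c^ε_k`, the coefficient of `z^{-k}` in `E^ε_-(z) = exp(∓ 2 Σ_{n>0} (∂/∂x_n) z^{-n})`. -/
noncomputable def cOp (ε : Bool) (k : ℕ) : EndF := expCoeff (cSeries ε) k

/-- The space `V = F ⊗ Λ ⊗ ℂ[ℤα]`, realized as finitely supported functions from
the basis `{v_{S,T} ⊗ e^{pα}}` of `Λ ⊗ ℂ[ℤα]` to the Fock space `F`: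
the index `((S,T), p)` records the basis vector `v_{S,T} ⊗ e^{pα}` and the value
is the `F`-coordinate, so `Finsupp.single ((S,T), p) f` is `f ⊗ v_{S,T} ⊗ e^{pα}`. -/
abbrev VV : Type := ((Finset ℕ+ × Finset ℕ+) × ℤ) →₀ Fock

/-- `emb w p f` is the element `f ⊗ w ⊗ e^{pα}` of `V` for `w ∈ Λ`. -/
noncomputable def emb (w : Wedge) (p : ℤ) (f : Fock) : VV :=
  w.sum fun ST c => Finsupp.single (ST, p) (c • f)

/-- The operator `X(m)` of the representation `π` on `V`:
`X(m)(f ⊗ v_{S,T} ⊗ e^{pα}) = Σ_{l,k ≥ 0} (d^+_l c^+_k f) ⊗ A(m+l-k-p-1/2) v_{S,T} ⊗ e^{(p+1)α}`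
(only finitely many summands are nonzero on each vector). -/
noncomputable def Xop (m : ℤ) : VV → VV := fun u =>
  u.sum fun STp f =>
    ∑ᶠ lk : ℕ × ℕ,
      emb (Abasis ((m : ℚ) + lk.1 - lk.2 - STp.2 - 1/2) STp.1) (STp.2 + 1)
        (dOp true lk.1 (cOp true lk.2 f))

/-- The operator `Y(m)` of the representation `π` on `V`:
`Y(m)(f ⊗ v_{S,T} ⊗ e^{pα}) = Σ_{l,k ≥ 0} (d^-_l c^-_k f) ⊗ A*(m+l-k+p-1/2) v_{S,T} ⊗ e^{(p-1)α}`. -/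
noncomputable def Yop (m : ℤ) : VV → VV := fun u =>
  u.sum fun STp f =>
    ∑ᶠ lk : ℕ × ℕ,
      emb (AstarBasis ((m : ℚ) + lk.1 - lk.2 + STp.2 - 1/2) STp.1) (STp.2 - 1)
        (dOp false lk.1 (cOp false lk.2 f))

/-- The operator `H(m)` of the representation `π` on `V`: for `m ≠ 0` it acts as
`H(m)` on the Fock factor, and `H(0)` acts on `f ⊗ v ⊗ e^{pα}` by the scalar `2p`. -/
noncomputable def HVop (m : ℤ) : VV → VV := fun u =>
  u.sum fun STp f =>
    Finsupp.single STp (if m = 0 then ((2 : ℂ) * (STp.2 : ℂ)) • f else HF m f)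

/-- The weight of a monomial `x₁^{a₁} x₂^{a₂} ⋯`, namely `Σ n aₙ`. -/
def wtMon (μ : ℕ+ →₀ ℕ) : ℚ := μ.sum fun n a => (n : ℚ) * a

/-- The degree of the basis vector `v_{S,T}` of `Λ`: `Σ_{s∈S} s + Σ_{t∈T} t`. -/
def degWedge (ST : Finset ℕ+ × Finset ℕ+) : ℚ :=
  (∑ s ∈ ST.1, (s : ℚ)) + ∑ t ∈ ST.2, (t : ℚ)

/-- The degree operator `d` of the representation `π` on `V`:
`d (f ⊗ v_{S,T} ⊗ e^{pα}) = (-wt(f) - deg(v_{S,T}) - p²/2) ⬝ (f ⊗ v_{S,T} ⊗ e^{pα})`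
on monomials `f`. -/
noncomputable def dV : VV → VV := fun u =>
  u.sum fun STp f =>
    Finsupp.single STp
      (∑ μ ∈ f.support,
        monomial μ
          ((((-(wtMon μ) - degWedge STp.1 - (STp.2 : ℚ) ^ 2 / 2 : ℚ) : ℂ)) * coeff μ f))

/-- The vacuum space `Ω = Λ ⊗ ℂ[ℤα]`, with basis `{v_{S,T} ⊗ e^{pα}}`. -/
abbrev Vac : Type := ((Finset ℕ+ × Finset ℕ+) × ℤ) →₀ ℂ

/-- `embVac w p` is the element `w ⊗ e^{pα}` of `Ω` for `w ∈ Λ`. -/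
noncomputable def embVac (w : Wedge) (p : ℤ) : Vac :=
  w.sum fun ST c => Finsupp.single (ST, p) c

/-- The operator `Z⁺(m)` on `Ω`: `Z⁺(m)(v ⊗ e^{pα}) = A(m-p-1/2)v ⊗ e^{(p+1)α}`. -/
noncomputable def Zplus (m : ℤ) : Vac → Vac := fun u =>
  u.sum fun STp c => c • embVac (Abasis ((m : ℚ) - STp.2 - 1/2) STp.1) (STp.2 + 1)

/-- The operator `Z⁻(m)` on `Ω`: `Z⁻(m)(v ⊗ e^{pα}) = A*(m+p-1/2)v ⊗ e^{(p-1)α}`. -/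
noncomputable def Zminus (m : ℤ) : Vac → Vac := fun u =>
  u.sum fun STp c => c • embVac (AstarBasis ((m : ℚ) + STp.2 - 1/2) STp.1) (STp.2 - 1)

/-- Extension to `V = F ⊗ Λ ⊗ ℂ[ℤα]` of an operator `e` on the Fock factor,
i.e. `e ⊗ 1 ⊗ 1`. -/
noncomputable def extF (e : EndF) : VV → VV := fun u =>
  u.sum fun STp f => Finsupp.single STp (e f)

/-- The operator `Z⁺(m) = Σ_{a,b≥0} (d⁻_a ⊗ 1 ⊗ 1) ∘ X(m+a-b) ∘ (c⁻_b ⊗ 1 ⊗ 1)` on `V`,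
the coefficient of `z^{-m}` in `E⁻₊(z) X(z) E⁻₋(z)` (only finitely many summands act
nontrivially on each vector). -/
noncomputable def ZplusV (m : ℤ) : VV → VV := fun u =>
  ∑ᶠ ab : ℕ × ℕ,
    extF (dOp false ab.1) (Xop (m + (ab.1 : ℤ) - (ab.2 : ℤ)) (extF (cOp false ab.2) u))

/-- The operator `Z⁻(m) = Σ_{a,b≥0} (d⁺_a ⊗ 1 ⊗ 1) ∘ Y(m+a-b) ∘ (c⁺_b ⊗ 1 ⊗ 1)` on `V`,
the coefficient of `z^{-m}` in `E⁺₊(z) Y(z) E⁺₋(z)`. -/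
noncomputable def ZminusV (m : ℤ) : VV → VV := fun u =>
  ∑ᶠ ab : ℕ × ℕ,
    extF (dOp true ab.1) (Yop (m + (ab.1 : ℤ) - (ab.2 : ℤ)) (extF (cOp true ab.2) u))

/-- `Ncount j` is the number of quadruples `(a, S, T, p)` with `a : ℤ_{≥1} → ℤ_{≥0}`
finitely supported, `S, T` finite subsets of the positive integers and `p ∈ ℤ`,
satisfying `2 Σ_{n≥1} n a(n) + 2 (Σ_{s∈S} s + Σ_{t∈T} t) + p² = j`; this is the
dimension of the eigenspace of `d` with eigenvalue `-j/2` on `V`. -/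
noncomputable def Ncount (j : ℕ) : ℕ :=
  Nat.card {q : (ℕ+ →₀ ℕ) × Finset ℕ+ × Finset ℕ+ × ℤ //
    2 * (q.1.sum fun n a => (n : ℤ) * a) +
      2 * ((∑ s ∈ q.2.1, (s : ℤ)) + ∑ t ∈ q.2.2.1, (t : ℤ)) + q.2.2.2 ^ 2 = (j : ℤ)}

/-! The dressing series are mutually inverse exponentials: `E⁻₊(z) E⁺₊(z) = 1` and
`E⁺₋(z) E⁻₋(z) = 1`, i.e. `Σ_{a+l=r} d^∓_a d^±_l = δ_{r,0}` and
`Σ_{k+b=s} c^±_k c^∓_b = δ_{s,0}`; both are `exp(g) exp(-g) = 1`, read through truncated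
exponential polynomials. Since `d` and `c` act on the Fock factor only, the summand of index
`(a, b, l, k)` of `Z^±(m)` is `d^∓_a d^±_l c^±_k c^∓_b f` tensored with the wedge operator at
`m + (a + l) - (k + b)`, so summing first over `k + b` and then over `a + l` leaves the wedge
operator at `m` applied to `f`. All sums are finite because `c_k` lowers the weight `Σ n aₙ` of
a polynomial by `k`, and `A(n + 1/2)`, `A*(n + 1/2)` kill a basis vector once `n` exceeds all
of its indices. -/

section TruncatedExponential
open PowerSeries Polynomial

variable {R A : Type*} [CommSemiring R] [Semiring A] [Algebra R A]

theorem PowerSeries.coeff_pow_eq_zero_of_lt {g : A⟦X⟧} (hg : constantCoeff g = 0) {a i : ℕ}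
    (h : a < i) : coeff a (g ^ i) = 0 :=
  coeff_of_lt_order a <| lt_of_lt_of_le (by exact_mod_cast h)
    (le_order_pow_of_constantCoeff_eq_zero i hg)

theorem PowerSeries.coeff_aeval_eq_sum {g : A⟦X⟧} (hg : constantCoeff g = 0) (P : R[X])
    (r : ℕ) :
    coeff r (Polynomial.aeval g P) = ∑ i ∈ Finset.range (r + 1), P.coeff i • coeff r (g ^ i) := by
  rw [Polynomial.aeval_eq_sum_range' (n := max (P.natDegree + 1) (r + 1)) (by omega), map_sum]
  simp only [coeff_smul]
  refine (Finset.sum_subset (Finset.range_subset_range.2 (le_max_right _ _)) fun i _ hi => ?_).symm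
  rw [coeff_pow_eq_zero_of_lt hg (by simpa using hi), smul_zero]

theorem PowerSeries.coeff_aeval_trunc {g : A⟦X⟧} (hg : constantCoeff g = 0) (P : R[X]) (r : ℕ) :
    coeff r (Polynomial.aeval g (trunc (r + 1) (P : R⟦X⟧))) =
      coeff r (Polynomial.aeval g P) := by
  rw [coeff_aeval_eq_sum hg, coeff_aeval_eq_sum hg]
  refine Finset.sum_congr rfl fun i hi => ?_
  rw [coeff_trunc, if_pos (Finset.mem_range.1 hi), Polynomial.coeff_coe]

end TruncatedExponential

section ExpCoeff
open PowerSeries Finset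

theorem expCoeff_smul_eq_coeff_aeval {g : EndF⟦X⟧} (hg : constantCoeff g = 0) (c : ℂ)
    {k r : ℕ} (hk : k ≤ r) :
    expCoeff (c • g) k = coeff k (Polynomial.aeval g (trunc (r + 1) (rescale c (exp ℂ)))) := by
  rw [coeff_aeval_eq_sum hg, expCoeff]
  refine sum_congr rfl fun i hi => ?_
  rw [coeff_trunc, if_pos (by rw [mem_range] at hi; omega), coeff_rescale, coeff_exp, smul_pow,
    PowerSeries.coeff_smul, smul_smul]
  congr 1
  simp [mul_comm]

theorem sum_antidiagonal_expCoeff_mul_expCoeff_neg {g : EndF⟦X⟧} (hg : constantCoeff g = 0)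
    (r : ℕ) :
    ∑ x ∈ antidiagonal r, expCoeff g x.1 * expCoeff (-g) x.2 = if r = 0 then 1 else 0 := by
  set E : ℂ → Polynomial ℂ := fun c => trunc (r + 1) (rescale c (exp ℂ))
  calc ∑ x ∈ antidiagonal r, expCoeff g x.1 * expCoeff (-g) x.2
      = ∑ x ∈ antidiagonal r,
          coeff x.1 (Polynomial.aeval g (E 1)) * coeff x.2 (Polynomial.aeval g (E (-1))) := by
        refine sum_congr rfl fun x hx => ?_
        have := mem_antidiagonal.1 hx
        rw [← expCoeff_smul_eq_coeff_aeval hg _ (by omega),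
          ← expCoeff_smul_eq_coeff_aeval hg _ (by omega), one_smul, neg_one_smul]
    _ = coeff r (Polynomial.aeval g (trunc (r + 1) ((E 1 * E (-1) : Polynomial ℂ) : ℂ⟦X⟧))) :=
        by
        rw [coeff_aeval_trunc hg, map_mul, PowerSeries.coeff_mul]
    _ = if r = 0 then 1 else 0 := by
        rw [Polynomial.coe_mul, trunc_trunc_mul_trunc, exp_mul_exp_eq_exp_add, add_neg_cancel,
          rescale_zero]
        simp [PowerSeries.coeff_one]

theorem sum_antidiagonal_expCoeff_apply {g : EndF⟦X⟧} (hg : constantCoeff g = 0) (r : ℕ)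
    (f : Fock) :
    ∑ x ∈ antidiagonal r, expCoeff g x.1 (expCoeff (-g) x.2 f) = if r = 0 then f else 0 := by
  have := LinearMap.congr_fun (sum_antidiagonal_expCoeff_mul_expCoeff_neg hg r) f
  simp only [LinearMap.sum_apply, Module.End.mul_apply] at this
  rw [this]
  split_ifs <;> rfl

theorem sgn_not (ε : Bool) : sgn (!ε) = -sgn ε := by
  cases ε <;> simp [sgn]

theorem dSeries_not (ε : Bool) : dSeries (!ε) = -dSeries ε := by
  ext n : 1
  rw [map_neg, dSeries, dSeries, coeff_mk, coeff_mk]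
  split_ifs
  · rw [sgn_not]; exact neg_smul (R := ℂ) (M := EndF) _ _
  · rw [neg_zero]

theorem cSeries_not (ε : Bool) : cSeries (!ε) = -cSeries ε := by
  ext n : 1
  rw [map_neg, cSeries, cSeries, coeff_mk, coeff_mk]
  split_ifs
  · rw [sgn_not]; exact neg_smul (R := ℂ) (M := EndF) _ _
  · rw [neg_zero]

theorem constantCoeff_dSeries (ε : Bool) : constantCoeff (dSeries ε) = 0 := by
  simp [dSeries]

theorem constantCoeff_cSeries (ε : Bool) : constantCoeff (cSeries ε) = 0 := by
  simp [cSeries]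

theorem sum_antidiagonal_dOp_not (ε : Bool) (r : ℕ) (f : Fock) :
    ∑ x ∈ antidiagonal r, dOp (!ε) x.1 (dOp ε x.2 f) = if r = 0 then f else 0 := by
  have h : dSeries ε = -dSeries (!ε) := by rw [dSeries_not, neg_neg]
  simp only [dOp, h, sum_antidiagonal_expCoeff_apply (constantCoeff_dSeries _)]

theorem sum_antidiagonal_cOp_not (ε : Bool) (r : ℕ) (f : Fock) :
    ∑ x ∈ antidiagonal r, cOp ε x.1 (cOp (!ε) x.2 f) = if r = 0 then f else 0 := by
  simp only [cOp, cSeries_not, sum_antidiagonal_expCoeff_apply (constantCoeff_cSeries _)]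

end ExpCoeff

section WeightFiltration

noncomputable def weightLE (W : ℤ) : Submodule ℂ Fock :=
  restrictSupport ℂ {μ | (Finsupp.weight ((↑) : ℕ+ → ℕ) μ : ℤ) ≤ W}

theorem exists_mem_weightLE (f : Fock) : ∃ W : ℤ, f ∈ weightLE W :=
  ⟨(f.support.sup (Finsupp.weight ((↑) : ℕ+ → ℕ)) : ℕ), fun _ hμ => by
    exact_mod_cast Finset.le_sup (f := Finsupp.weight ((↑) : ℕ+ → ℕ)) hμ⟩

theorem eq_zero_of_mem_weightLE {W : ℤ} (hW : W < 0) {f : Fock} (hf : f ∈ weightLE W) :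
    f = 0 := by
  rw [← support_eq_empty, Finset.eq_empty_iff_forall_notMem]
  intro μ hμ
  have : (Finsupp.weight ((↑) : ℕ+ → ℕ) μ : ℤ) ≤ W := hf hμ
  omega

theorem pderiv_mem_weightLE {W : ℤ} {f : Fock} (hf : f ∈ weightLE W) (n : ℕ+) :
    pderiv n f ∈ weightLE (W - n) := by
  intro μ (hμ : μ ∈ (pderiv n f).support)
  have hμ' : μ + Finsupp.single n 1 ∈ f.support := by
    rw [mem_support_iff, coeff_pderiv] at hμ
    exact mem_support_iff.2 (left_ne_zero_of_mul hμ)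
  have := hf hμ'
  simp only [Set.mem_ofPred_eq, map_add, Finsupp.weight_single, one_smul, Nat.cast_add]
    at this ⊢
  omega

noncomputable def weightLowering (k : ℤ) : Submodule ℂ EndF where
  carrier := {e | ∀ W, ∀ f ∈ weightLE W, e f ∈ weightLE (W - k)}
  add_mem' he he' W f hf := add_mem (he W f hf) (he' W f hf)
  zero_mem' _ _ _ := zero_mem _
  smul_mem' c _ he W f hf := Submodule.smul_mem _ c (he W f hf)

theorem one_mem_weightLowering : (1 : EndF) ∈ weightLowering 0 := fun W f hf => by
  rwa [sub_zero]

theorem mul_mem_weightLowering {k k' : ℤ} {e e' : EndF} (he : e ∈ weightLowering k)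
    (he' : e' ∈ weightLowering k') : e * e' ∈ weightLowering (k + k') := fun W f hf => by
  have := he _ _ (he' W f hf)
  rwa [sub_sub, add_comm k'] at this

open PowerSeries in
theorem coeff_pow_mem_weightLowering {g : EndF⟦X⟧}
    (hg : ∀ n : ℕ, coeff n g ∈ weightLowering n) (j k : ℕ) :
    coeff k (g ^ j) ∈ weightLowering k := by
  induction j generalizing k with
  | zero =>
    rw [pow_zero, PowerSeries.coeff_one]
    split_ifs with hk
    · exact hk ▸ one_mem_weightLowering
    · exact zero_mem _
  | succ j ih =>
    rw [pow_succ', PowerSeries.coeff_mul]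
    refine sum_mem fun x hx => ?_
    rw [← Finset.HasAntidiagonal.mem_antidiagonal.1 hx, Nat.cast_add]
    exact mul_mem_weightLowering (hg x.1) (ih x.2)

open PowerSeries in
theorem coeff_cSeries_mem_weightLowering (ε : Bool) (n : ℕ) :
    coeff n (cSeries ε) ∈ weightLowering n := by
  rw [cSeries, coeff_mk]
  split_ifs with hn
  · refine Submodule.smul_mem _ _ (Submodule.smul_mem _ _ fun W f hf => ?_)
    exact pderiv_mem_weightLE hf ⟨n, hn⟩
  · exact zero_mem _

theorem cOp_mem_weightLowering (ε : Bool) (k : ℕ) : cOp ε k ∈ weightLowering k :=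
  sum_mem fun _ _ => Submodule.smul_mem _ _ <|
    coeff_pow_mem_weightLowering (coeff_cSeries_mem_weightLowering ε) _ _

theorem cOp_apply_eq_zero {W : ℤ} {f : Fock} (hf : f ∈ weightLE W) (ε : Bool) {k : ℕ}
    (hk : W < k) : cOp ε k f = 0 :=
  eq_zero_of_mem_weightLE (by omega) (cOp_mem_weightLowering ε k W f hf)

end WeightFiltration

theorem emb_zero_left (q : ℤ) (f : Fock) : emb 0 q f = 0 :=
  Finsupp.sum_zero_index

theorem emb_add (w : Wedge) (q : ℤ) (f g : Fock) :
    emb w q (f + g) = emb w q f + emb w q g := by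
  simp only [emb, smul_add, Finsupp.single_add, Finsupp.sum_add]

theorem emb_zero (w : Wedge) (q : ℤ) : emb w q 0 = 0 := by
  simp [emb]

noncomputable def embHom (w : Wedge) (q : ℤ) : Fock →+ VV :=
  AddMonoidHom.mk' (emb w q) (emb_add w q)

theorem extF_eq_mapRange (e : EndF) :
    extF e = Finsupp.mapRange.addMonoidHom e.toAddMonoidHom := by
  ext u x : 2
  by_cases hx : u x = 0 <;> simp [extF, Finsupp.sum_apply, Finsupp.single_apply, hx]

theorem extF_emb (e : EndF) (w : Wedge) (q : ℤ) (f : Fock) :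
    extF e (emb w q f) = emb w q (e f) := by
  simp [extF_eq_mapRange, emb, Finsupp.sum, map_sum]

theorem extF_sum_emb (e : EndF) (w : (Finset ℕ+ × Finset ℕ+) × ℤ → Wedge)
    (q : (Finset ℕ+ × Finset ℕ+) × ℤ → ℤ) (u : VV) :
    extF e (u.sum fun x f => emb (w x) (q x) f) =
      (extF e u).sum fun x f => emb (w x) (q x) f := by
  rw [extF_eq_mapRange, map_finsuppSum, Finsupp.mapRange.addMonoidHom_apply,
    Finsupp.sum_mapRange_index fun x => emb_zero _ _]
  simp only [← extF_eq_mapRange, extF_emb]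
  rfl

section BoxSums
open Finset

variable {M : Type*} [AddCommMonoid M]

theorem finsum_eq_sum_range_product {F : ℕ × ℕ → M} {K : ℕ}
    (hF : ∀ x, K ≤ x.1 ∨ K ≤ x.2 → F x = 0) :
    ∑ᶠ x, F x = ∑ x ∈ range K ×ˢ range K, F x := by
  refine finsum_eq_sum_of_support_subset F fun x hx => ?_
  by_contra h
  simp only [coe_product, coe_range, Set.mem_prod, Set.mem_Iio, not_and_or, not_lt] at h
  exact hx (hF x h)

theorem hasFiniteSupport_of_range_product {F : ℕ × ℕ → M} {K : ℕ}
    (hF : ∀ x, K ≤ x.1 ∨ K ≤ x.2 → F x = 0) : Function.HasFiniteSupport F := by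
  refine (range K ×ˢ range K).finite_toSet.subset fun x hx => ?_
  by_contra h
  simp only [coe_product, coe_range, Set.mem_prod, Set.mem_Iio, not_and_or, not_lt] at h
  exact hx (hF x h)

theorem sum_range_product_eq_sum_antidiagonal {F : ℕ × ℕ → M} {K : ℕ}
    (hF : ∀ x, K ≤ x.1 + x.2 → F x = 0) :
    ∑ x ∈ range K ×ˢ range K, F x = ∑ r ∈ range K, ∑ x ∈ antidiagonal r, F x := by
  rw [← sum_filter_of_ne (p := fun x => x.1 + x.2 < K) fun x _ hx => by
      by_contra h; exact hx (hF x (not_lt.1 h)),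
    ← sum_fiberwise_of_maps_to (g := fun x => x.1 + x.2) (t := range K) (by simp)]
  refine sum_congr rfl fun r hr => sum_congr ?_ fun _ _ => rfl
  ext x
  simp only [mem_filter, mem_product, mem_range, HasAntidiagonal.mem_antidiagonal] at hr ⊢
  omega

theorem sum_range_sum_range_collapse {P Q : ℕ → EndF}
    (hPQ : ∀ r f, ∑ x ∈ antidiagonal r, P x.1 (Q x.2 f) = if r = 0 then f else 0)
    (Φ : ℕ → Fock →+ M) (f : Fock) {K : ℕ} (hK : 0 < K)
    (hvan : ∀ a l, K ≤ a + l → Φ (a + l) (P a (Q l f)) = 0) :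
    ∑ a ∈ range K, ∑ l ∈ range K, Φ (a + l) (P a (Q l f)) = Φ 0 f := by
  rw [← sum_product', sum_range_product_eq_sum_antidiagonal fun x => hvan x.1 x.2]
  have hr : ∀ r ∈ range K, ∑ x ∈ antidiagonal r, Φ (x.1 + x.2) (P x.1 (Q x.2 f)) =
      Φ r (if r = 0 then f else 0) := fun r _ => by
    rw [← hPQ, map_sum]
    exact sum_congr rfl fun x hx => by rw [HasAntidiagonal.mem_antidiagonal.1 hx]
  rw [sum_congr rfl hr, sum_eq_single_of_mem 0 (mem_range.2 hK) fun r _ hr => by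
    rw [if_neg hr, map_zero], if_pos rfl]

end BoxSums

theorem floor_intCast_sub_half (z : ℤ) : ⌊(z : ℚ) - 1 / 2⌋ = z - 1 := by
  rw [Int.floor_eq_iff]
  push_cast
  constructor <;> linarith

theorem Abasis_eq_zero_of_floor_gt {m : ℚ} {ST : Finset ℕ+ × Finset ℕ+} (hm : 1 ≤ ⌊m⌋)
    (hT : ∀ t ∈ ST.2, (t : ℤ) < ⌊m⌋) : Abasis m ST = 0 := by
  rw [Abasis]
  split_ifs
  · rw [dif_pos hm, if_neg fun hk => ?_]
    have := hT _ hk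
    simp only [PNat.mk_coe] at this
    omega
  · rfl

theorem AstarBasis_eq_zero_of_floor_gt {m : ℚ} {ST : Finset ℕ+ × Finset ℕ+} (hm : 1 ≤ ⌊m⌋)
    (hS : ∀ s ∈ ST.1, (s : ℤ) < ⌊m⌋) : AstarBasis m ST = 0 := by
  rw [AstarBasis]
  split_ifs
  · rw [dif_pos hm, if_neg fun hs => ?_]
    have := hS _ hs
    simp only [PNat.mk_coe] at this
    omega
  · rfl

theorem exists_Abasis_eq_zero (x : (Finset ℕ+ × Finset ℕ+) × ℤ) :
    ∃ N : ℤ, ∀ n ≥ N, Abasis ((n : ℚ) - x.2 - 1 / 2) x.1 = 0 := by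
  obtain ⟨b, hb⟩ := (x.1.2.image ((↑) : ℕ+ → ℤ)).exists_le
  refine ⟨max b 1 + x.2 + 2, fun n hn => Abasis_eq_zero_of_floor_gt ?_ fun t ht => ?_⟩ <;>
        rw [show (n : ℚ) - x.2 - 1 / 2 = ((n - x.2 : ℤ) : ℚ) - 1 / 2 by push_cast; ring,
        floor_intCast_sub_half]
  · omega
  · have := hb _ (Finset.mem_image_of_mem _ ht)
    omega

theorem exists_AstarBasis_eq_zero (x : (Finset ℕ+ × Finset ℕ+) × ℤ) :
    ∃ N : ℤ, ∀ n ≥ N, AstarBasis ((n : ℚ) + x.2 - 1 / 2) x.1 = 0 := by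
  obtain ⟨b, hb⟩ := (x.1.1.image ((↑) : ℕ+ → ℤ)).exists_le
  refine ⟨max b 1 - x.2 + 2, fun n hn =>
    AstarBasis_eq_zero_of_floor_gt ?_ fun s hs => ?_⟩ <;>
        rw [show (n : ℚ) + x.2 - 1 / 2 = ((n + x.2 : ℤ) : ℚ) - 1 / 2 by push_cast; ring,
        floor_intCast_sub_half]
  · omega
  · have := hb _ (Finset.mem_image_of_mem _ hs)
    omega

section VertexOperator
open Finset

variable (ε : Bool)

noncomputable def vertexOp (B : ℤ → (Finset ℕ+ × Finset ℕ+) × ℤ → Wedge) (δ n : ℤ)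
    (u : VV) : VV :=
  u.sum fun x f => ∑ᶠ lk : ℕ × ℕ,
    emb (B (n + lk.1 - lk.2) x) (x.2 + δ) (dOp ε lk.1 (cOp ε lk.2 f))

theorem Xop_eq_vertexOp (m : ℤ) :
    Xop m = vertexOp true (fun n x => Abasis ((n : ℚ) - x.2 - 1 / 2) x.1) 1 m := by
  funext u
  simp only [Xop, vertexOp, Int.cast_sub, Int.cast_add, Int.cast_natCast]

theorem Yop_eq_vertexOp (m : ℤ) :
    Yop m = vertexOp false (fun n x => AstarBasis ((n : ℚ) + x.2 - 1 / 2) x.1) (-1) m := by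
  funext u
  simp only [Yop, vertexOp, Int.cast_sub, Int.cast_add, Int.cast_natCast, ← sub_eq_add_neg]

theorem vertexOp_extF (B : ℤ → (Finset ℕ+ × Finset ℕ+) × ℤ → Wedge) (δ n : ℤ) (e : EndF)
    (u : VV) :
    vertexOp ε B δ n (extF e u) = u.sum fun x f => ∑ᶠ lk : ℕ × ℕ,
      emb (B (n + lk.1 - lk.2) x) (x.2 + δ) (dOp ε lk.1 (cOp ε lk.2 (e f))) := by
  rw [extF_eq_mapRange, Finsupp.mapRange.addMonoidHom_apply, vertexOp,
    Finsupp.sum_mapRange_index]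
  · rfl
  · intro x
    simp [emb_zero]

/-- The summand of index `(a, b, l, k)` of `Σ_{a,b} d^{!ε}_a ∘ (vertex operator at m + a - b) ∘
c^{!ε}_b`, evaluated on `f ⊗ v ⊗ e^{pα}` with `w n = B n ((S, T), p)` and `q = p + δ`. -/
noncomputable def dressedTerm (w : ℤ → Wedge) (q m : ℤ) (f : Fock) (ab lk : ℕ × ℕ) : VV :=
  emb (w (m + ab.1 - ab.2 + lk.1 - lk.2)) q
    (dOp (!ε) ab.1 (dOp ε lk.1 (cOp ε lk.2 (cOp (!ε) ab.2 f))))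

variable {ε} {w : ℤ → Wedge} {N : ℤ}

theorem emb_vertexTerm_eq_zero (hw : ∀ n ≥ N, w n = 0) (q : ℤ) {W : ℤ} {g : Fock}
    (hg : g ∈ weightLE W) (P : EndF) {n : ℤ} {l k : ℕ} (h : W < k ∨ N ≤ n + l - k) :
    emb (w (n + l - k)) q (P (dOp ε l (cOp ε k g))) = 0 := by
  rcases h with h | h
  · rw [cOp_apply_eq_zero hg ε h, map_zero, map_zero, emb_zero]
  · rw [hw _ h, emb_zero_left]

theorem hasFiniteSupport_vertexTerm (hw : ∀ n ≥ N, w n = 0) (q : ℤ) {W : ℤ} {g : Fock}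
    (hg : g ∈ weightLE W) (n : ℤ) :
    Function.HasFiniteSupport fun lk : ℕ × ℕ =>
      emb (w (n + lk.1 - lk.2)) q (dOp ε lk.1 (cOp ε lk.2 g)) :=
  hasFiniteSupport_of_range_product (K := (N - n).toNat + 2 * W.toNat + 1) fun _ _ =>
    emb_vertexTerm_eq_zero hw q hg 1 (by omega)

theorem dressedTerm_eq_zero (hw : ∀ n ≥ N, w n = 0) (q : ℤ) {m W : ℤ} {f : Fock}
    (hf : f ∈ weightLE W) {K : ℕ} (hK : (N - m).toNat + 2 * W.toNat + 1 ≤ K) {ab lk : ℕ × ℕ}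
    (h : K ≤ ab.1 ∨ K ≤ ab.2 ∨ K ≤ lk.1 ∨ K ≤ lk.2) : dressedTerm ε w q m f ab lk = 0 :=
  emb_vertexTerm_eq_zero hw q (cOp_mem_weightLowering (!ε) ab.2 W f hf) _ (by omega)

theorem sum_dressedTerm (hw : ∀ n ≥ N, w n = 0) (q : ℤ) {m W : ℤ} {f : Fock}
    (hf : f ∈ weightLE W) {K : ℕ} (hK : (N - m).toNat + 2 * W.toNat + 1 ≤ K) :
    ∑ ab ∈ range K ×ˢ range K, ∑ lk ∈ range K ×ˢ range K, dressedTerm ε w q m f ab lk =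
      emb (w m) q f := by
  have hK0 : 0 < K := by omega
  calc ∑ ab ∈ range K ×ˢ range K, ∑ lk ∈ range K ×ˢ range K, dressedTerm ε w q m f ab lk
      = ∑ a ∈ range K, ∑ l ∈ range K, ∑ k ∈ range K, ∑ b ∈ range K,
          embHom (w (m + (a + l : ℕ) - (k + b : ℕ))) q
            (dOp (!ε) a (dOp ε l (cOp ε k (cOp (!ε) b f)))) := by
        simp only [sum_product]
        refine sum_congr rfl fun a _ => ?_
        rw [sum_comm]
        refine sum_congr rfl fun l _ => ?_
        rw [sum_comm]
        refine sum_congr rfl fun k _ => sum_congr rfl fun b _ => ?_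
        simp only [dressedTerm, embHom, AddMonoidHom.mk'_apply]
        congr 2
        push_cast
        ring
    _ = ∑ a ∈ range K, ∑ l ∈ range K,
          embHom (w (m + (a + l : ℕ))) q (dOp (!ε) a (dOp ε l f)) := by
        refine sum_congr rfl fun a _ => sum_congr rfl fun l _ => ?_
        refine (sum_range_sum_range_collapse (sum_antidiagonal_cOp_not ε)
          (fun s => (embHom (w (m + (a + l : ℕ) - s)) q).comp
            (dOp (!ε) a * dOp ε l).toAddMonoidHom) f hK0 fun k b hkb => ?_).trans ?_
        · have := cOp_mem_weightLowering (!ε) b W f hf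
          simp [cOp_apply_eq_zero this ε (k := k) (by omega)]
        · simp [embHom]
    _ = emb (w m) q f := by
        refine (sum_range_sum_range_collapse (sum_antidiagonal_dOp_not ε)
          (fun r => embHom (w (m + r)) q) f hK0 fun a l hal => ?_).trans ?_
        · simp only [embHom, AddMonoidHom.mk'_apply]
          rw [hw _ (by omega), emb_zero_left]
        · simp [embHom]

theorem finsum_dressedTerm (hw : ∀ n ≥ N, w n = 0) (q m : ℤ) (f : Fock) :
    Function.HasFiniteSupport (fun ab => ∑ᶠ lk, dressedTerm ε w q m f ab lk) ∧
      ∑ᶠ ab, ∑ᶠ lk, dressedTerm ε w q m f ab lk = emb (w m) q f := by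
  obtain ⟨W, hf⟩ := exists_mem_weightLE f
  -- `b + k > W` kills `f`; otherwise `a + l ≥ N - m + W` pushes the argument of `w` past `N`.
  set K := (N - m).toNat + 2 * W.toNat + 1 with hK
  have hin : ∀ ab, ∑ᶠ lk, dressedTerm ε w q m f ab lk =
      ∑ lk ∈ range K ×ˢ range K, dressedTerm ε w q m f ab lk := fun ab =>
    finsum_eq_sum_range_product fun lk h => dressedTerm_eq_zero hw q hf hK.ge (by tauto)
  have hout : ∀ ab : ℕ × ℕ, K ≤ ab.1 ∨ K ≤ ab.2 →
      ∑ lk ∈ range K ×ˢ range K, dressedTerm ε w q m f ab lk = 0 := fun ab h =>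
    sum_eq_zero fun lk _ => dressedTerm_eq_zero hw q hf hK.ge (by tauto)
  simp only [hin]
  exact ⟨hasFiniteSupport_of_range_product hout,
    (finsum_eq_sum_range_product hout).trans (sum_dressedTerm hw q hf hK.ge)⟩

theorem finsum_extF_vertexOp_extF (B : ℤ → (Finset ℕ+ × Finset ℕ+) × ℤ → Wedge) (δ : ℤ)
    (hB : ∀ x, ∃ N : ℤ, ∀ n ≥ N, B n x = 0) (m : ℤ) (u : VV) :
    ∑ᶠ ab : ℕ × ℕ, extF (dOp (!ε) ab.1)
        (vertexOp ε B δ (m + ab.1 - ab.2) (extF (cOp (!ε) ab.2) u)) =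
      u.sum fun x f => emb (B m x) (x.2 + δ) f := by
  have hterm : ∀ ab : ℕ × ℕ, extF (dOp (!ε) ab.1)
      (vertexOp ε B δ (m + ab.1 - ab.2) (extF (cOp (!ε) ab.2) u)) =
        u.sum fun x f => ∑ᶠ lk, dressedTerm ε (B · x) (x.2 + δ) m f ab lk := by
    intro ab
    rw [vertexOp_extF, extF_eq_mapRange, map_finsuppSum]
    refine Finsupp.sum_congr fun x _ => ?_
    obtain ⟨N, hN⟩ := hB x
    obtain ⟨W, hW⟩ := exists_mem_weightLE (cOp (!ε) ab.2 (u x))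
    rw [AddMonoidHom.map_finsum _ (hasFiniteSupport_vertexTerm hN _ hW _)]
    refine finsum_congr fun lk => ?_
    rw [← extF_eq_mapRange, extF_emb]
    rfl
  simp only [finsum_congr hterm, Finsupp.sum]
  rw [finsum_sum_comm _ _ fun x _ => (finsum_dressedTerm (hB x).choose_spec _ _ _).1]
  exact sum_congr rfl fun x _ => (finsum_dressedTerm (hB x).choose_spec _ _ _).2

end VertexOperator

theorem ZplusV_eq (m : ℤ) (u : VV) :
    ZplusV m u = u.sum fun x f => emb (Abasis ((m : ℚ) - x.2 - 1 / 2) x.1) (x.2 + 1) f := by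
  simp only [ZplusV, Xop_eq_vertexOp]
  exact finsum_extF_vertexOp_extF (ε := true) _ 1 exists_Abasis_eq_zero m u

theorem ZminusV_eq (m : ℤ) (u : VV) :
    ZminusV m u =
      u.sum fun x f => emb (AstarBasis ((m : ℚ) + x.2 - 1 / 2) x.1) (x.2 - 1) f := by
  simp only [ZminusV, Yop_eq_vertexOp, sub_eq_add_neg (_ : ℤ) 1]
  exact finsum_extF_vertexOp_extF (ε := false) _ (-1) exists_AstarBasis_eq_zero m u

theorem statement16 :
    (∀ (m : ℤ) (S T : Finset ℕ+) (p : ℤ) (f : Fock),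
        ZplusV m (Finsupp.single ((S, T), p) f) =
          emb (Abasis ((m : ℚ) - p - 1/2) (S, T)) (p + 1) f) ∧
    (∀ (m : ℤ) (S T : Finset ℕ+) (p : ℤ) (f : Fock),
        ZminusV m (Finsupp.single ((S, T), p) f) =
          emb (AstarBasis ((m : ℚ) + p - 1/2) (S, T)) (p - 1) f) ∧
    (∀ (m n : ℤ), n ≠ 0 → ∀ u : VV,
        ZplusV m (extF (HF n) u) = extF (HF n) (ZplusV m u) ∧
        ZminusV m (extF (HF n) u) = extF (HF n) (ZminusV m u)) := by
  refine ⟨fun m S T p f => ?_, fun m S T p f => ?_, fun m n _ u => ⟨?_, ?_⟩⟩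
  · rw [ZplusV_eq, Finsupp.sum_single_index]
    exact emb_zero _ _
  · rw [ZminusV_eq, Finsupp.sum_single_index]
    exact emb_zero _ _
  · rw [ZplusV_eq, ZplusV_eq, extF_sum_emb]
  · rw [ZminusV_eq, ZminusV_eq, extF_sum_emb]
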